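/- Let R be a commutative ring and I an ideal such that R is I-adically Hausdorff complete (IsAdicComplete I R). Let n be a finite index type and T : Matrix n n R a square matrix. Then T is invertible (IsUnit T in the matrix ring) if and only if its entrywise reduction modulo I, i.e. the matrix T̄ over R/I obtained by applying the quotient map R → R/I to each entry, is invertible over R/I. -/

import Mathlib

/-!
In an `I`-adically complete ring, `I` lies in the Jacobson radical, so reduction modulo `I`
reflects units. A square matrix is a unit iff its determinant is, and the determinant commutes
with entrywise reduction, so matrix reduction reflects units as well.
-/

theorem RingHom.isLocalHom_mapMatrix {R S : Type*} [CommRing R] [CommRing S] (f : R →+* S)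
    [IsLocalHom f] (n : Type*) [Fintype n] [DecidableEq n] :
    IsLocalHom (f.mapMatrix : Matrix n n R →+* Matrix n n S) where
  map_nonunit A hA := by
    rw [Matrix.isUnit_iff_isUnit_det, ← f.map_det] at hA
    exact (Matrix.isUnit_iff_isUnit_det A).mpr hA.of_map

theorem Ideal.isLocalHom_quotientMk_of_isAdicComplete {R : Type*} [CommRing R] (I : Ideal R)
    [IsAdicComplete I R] : IsLocalHom (Ideal.Quotient.mk I) :=
  isLocalHom_of_le_jacobson_bot I (IsAdicComplete.le_jacobson_bot I)

/-- Over an `I`-adically Hausdorff complete commutative ring, a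
square matrix is invertible iff its entrywise reduction modulo `I` is invertible
over `R/I`. -/
theorem matrix_isUnit_iff_isUnit_map_quotient
    {R : Type*} [CommRing R] (I : Ideal R) [IsAdicComplete I R]
    {n : Type*} [Fintype n] [DecidableEq n] (T : Matrix n n R) :
    IsUnit T ↔ IsUnit (T.map (Ideal.Quotient.mk I)) := by
  have := I.isLocalHom_quotientMk_of_isAdicComplete
  have := (Ideal.Quotient.mk I).isLocalHom_mapMatrix n
  exact (isUnit_map_iff (Ideal.Quotient.mk I).mapMatrix T).symm
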